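/- arXiv:2208.00801 — 4 statements merged into one kernel-verified Lean document; each statement's English description precedes it below -/
import Mathlib

section
/- If X and Y are graphs on n vertices with 2·Δ(X)·Δ(Y) < n, then there exists a bijection σ : V(X) → V(Y) such that for every edge {a,b} of X, the pair {σ(a),σ(b)} is not an edge of Y. -/
/-!
Among all bijections `σ : V ≃ W`, take one whose conflict graph (the edges of `X` sent onto
edges of `Y`) is minimal. If it had a conflict `uv`, pick `w ≠ v` such that no `X`-neighbour
of `u` is sent next to `σ w` and no `X`-neighbour of `w` is sent next to `σ u`; at most
`Δ(X)Δ(Y)` vertices violate each condition and `u` violates both, so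
`2Δ(X)Δ(Y) < n` leaves room for `w`. Exchanging the images of `u` and `w` creates no new
conflict and destroys `uv`, contradicting minimality.
-/

/-- The friends-and-strangers graph `FS X Y`: vertices are bijections
`V(X) ≃ V(Y)`; two bijections are adjacent iff they differ precisely on two
`X`-adjacent vertices, with the swapped values adjacent in `Y`. -/
def FS {V W : Type*} (X : SimpleGraph V) (Y : SimpleGraph W) : SimpleGraph (V ≃ W) where
  Adj σ σ' := ∃ a b : V, X.Adj a b ∧ Y.Adj (σ a) (σ b) ∧ σ' a = σ b ∧ σ' b = σ a ∧
    ∀ c : V, c ≠ a → c ≠ b → σ' c = σ c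
  symm := by
    constructor
    rintro σ σ' ⟨a, b, hX, hY, h1, h2, h3⟩
    refine ⟨a, b, hX, ?_, h2.symm, h1.symm, fun c hca hcb => (h3 c hca hcb).symm⟩
    rw [h1, h2]; exact hY.symm
  loopless := by
    constructor
    rintro σ ⟨a, b, hX, _, h1, _⟩
    exact hX.ne (σ.injective h1)

/-- `u` and `v` are `(X,Y)`-exchangeable from `σ` if `σ` and `τ_{uv} ∘ σ`
lie in the same connected component of `FS X Y`. -/
def Exchangeable {V W : Type*} [DecidableEq W] (X : SimpleGraph V) (Y : SimpleGraph W)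
    (u v : W) (σ : V ≃ W) : Prop :=
  (FS X Y).Reachable σ (σ.trans (Equiv.swap u v))

open Finset

namespace SimpleGraph

variable {V W : Type*}

def conflictGraph (X : SimpleGraph V) (Y : SimpleGraph W) (σ : V ≃ W) : SimpleGraph V :=
  X ⊓ Y.comap σ

lemma exists_finset_mem_of_adj_adj [Fintype V] (G H : SimpleGraph V) [DecidableRel G.Adj]
    [DecidableRel H.Adj] (u : V) :
    ∃ s : Finset V, #s ≤ G.maxDegree * H.maxDegree ∧ ∀ c w, G.Adj u c → H.Adj c w → w ∈ s := by
  classical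
  refine ⟨(G.neighborFinset u).biUnion (H.neighborFinset ·), ?_, fun c w huc hcw => ?_⟩
  · calc #((G.neighborFinset u).biUnion (H.neighborFinset ·))
        ≤ ∑ c ∈ G.neighborFinset u, H.degree c := card_biUnion_le
      _ ≤ ∑ _c ∈ G.neighborFinset u, H.maxDegree := sum_le_sum fun c _ => H.degree_le_maxDegree c
      _ = G.degree u * H.maxDegree := by rw [sum_const, smul_eq_mul, card_neighborFinset_eq_degree]
      _ ≤ G.maxDegree * H.maxDegree := Nat.mul_le_mul_right _ (G.degree_le_maxDegree u)
  · exact mem_biUnion.2 ⟨c, (G.mem_neighborFinset u c).2 huc, (H.mem_neighborFinset c w).2 hcw⟩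

variable [DecidableEq V] {X : SimpleGraph V} {Y : SimpleGraph W} {σ : V ≃ W} {u v w : V}

lemma conflictGraph_swap_trans_le (hu : ∀ c, X.Adj u c → ¬ Y.Adj (σ c) (σ w))
    (hw : ∀ c, X.Adj w c → ¬ Y.Adj (σ u) (σ c)) :
    conflictGraph X Y ((Equiv.swap u w).trans σ) ≤ conflictGraph X Y σ := by
  rintro a b ⟨hab, hσab⟩
  refine ⟨hab, ?_⟩
  simp only [comap_adj, Equiv.trans_apply, Equiv.swap_apply_def] at hσab ⊢
  -- If both or neither of `a`, `b` lie in `{u, w}`, the pair keeps its image up to order;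
  -- otherwise `hu` or `hw` excludes it.
  split_ifs at hσab <;> subst_vars <;> grind [Adj.symm, Adj.ne]

lemma conflictGraph_swap_trans_lt (huv : (conflictGraph X Y σ).Adj u v) (hwv : w ≠ v)
    (hu : ∀ c, X.Adj u c → ¬ Y.Adj (σ c) (σ w)) (hw : ∀ c, X.Adj w c → ¬ Y.Adj (σ u) (σ c)) :
    conflictGraph X Y ((Equiv.swap u w).trans σ) < conflictGraph X Y σ := by
  refine lt_of_le_not_ge (conflictGraph_swap_trans_le hu hw) fun hle => ?_
  obtain ⟨-, hσ'⟩ := hle huv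
  have hvu : v ≠ u := huv.ne.symm
  simp only [comap_adj, Equiv.trans_apply, Equiv.swap_apply_left,
    Equiv.swap_apply_of_ne_of_ne hvu hwv.symm] at hσ'
  exact hu v huv.1 hσ'.symm

lemma exists_swap_partner [Fintype V] [Fintype W] [DecidableRel X.Adj] [DecidableRel Y.Adj]
    (h : 2 * X.maxDegree * Y.maxDegree < Fintype.card V) (huv : (conflictGraph X Y σ).Adj u v) :
    ∃ w, w ≠ v ∧ (∀ c, X.Adj u c → ¬ Y.Adj (σ c) (σ w)) ∧
      ∀ c, X.Adj w c → ¬ Y.Adj (σ u) (σ c) := by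
  classical
  obtain ⟨s, hs, hsu⟩ := exists_finset_mem_of_adj_adj X (Y.comap σ) u
  obtain ⟨t, ht, htu⟩ := exists_finset_mem_of_adj_adj (Y.comap σ) X u
  rw [(Iso.comap σ Y).maxDegree_eq] at hs ht
  have hst : (s ∩ t).Nonempty :=
    ⟨u, mem_inter.2 ⟨hsu v u huv.1 huv.2.symm, htu v u huv.2 huv.1.symm⟩⟩
  have hcard : #(insert v (s ∪ t)) < #(univ : Finset V) := by
    have := card_union_add_card_inter s t
    calc #(insert v (s ∪ t)) ≤ #(s ∪ t) + 1 := card_insert_le _ _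
      _ ≤ #s + #t := by have := hst.card_pos; omega
      _ ≤ 2 * X.maxDegree * Y.maxDegree := by rw [mul_comm Y.maxDegree] at ht; linarith
      _ < #(univ : Finset V) := by rwa [card_univ]
  obtain ⟨w, -, hw⟩ := exists_mem_notMem_of_card_lt_card hcard
  simp only [mem_insert, mem_union, not_or] at hw
  exact ⟨w, hw.1, fun c huc hcw => hw.2.1 (hsu c w huc hcw),
    fun c hwc huc => hw.2.2 (htu c w huc hwc.symm)⟩

end SimpleGraph

open SimpleGraph in
theorem catlin_sauer_spencer {V W : Type*} [Fintype V] [Fintype W]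
    (n : ℕ) (hV : Fintype.card V = n) (hW : Fintype.card W = n)
    (X : SimpleGraph V) (Y : SimpleGraph W)
    [DecidableRel X.Adj] [DecidableRel Y.Adj]
    (h : 2 * X.maxDegree * Y.maxDegree < n) :
    ∃ σ : V ≃ W, ∀ a b : V, X.Adj a b → ¬ Y.Adj (σ a) (σ b) := by
  classical
  obtain ⟨σ₀⟩ : Nonempty (V ≃ W) := Fintype.card_eq.mp (hV.trans hW.symm)
  obtain ⟨σ, hσ⟩ :=
    exists_minimalFor_of_wellFoundedLT (fun _ => True) (conflictGraph X Y) ⟨σ₀, trivial⟩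
  refine ⟨σ, fun u v huv hσuv => ?_⟩
  have hconflict : (conflictGraph X Y σ).Adj u v := ⟨huv, hσuv⟩
  obtain ⟨w, hwv, hu, hw⟩ := exists_swap_partner (hV ▸ h) hconflict
  exact hσ.not_lt trivial (conflictGraph_swap_trans_lt hconflict hwv hu hw)
end

section
/- If X and Y are graphs on n vertices with n ≥ 2, at least one edge in X, and 2·Δ(X)·Δ(Y) < n, then the friends-and-strangers graph FS(X,Y) is disconnected. -/
/-!
A bijection `σ` sending every edge of `X` to a non-edge of `Y` is an isolated vertex of `FS X Y`,
which has at least two vertices once `n ≥ 2`. Such a `σ` exists when `2 Δ(X) Δ(Y) < n`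
(Sauer–Spencer): take `σ` with the fewest conflicting edges. If `uv` is a conflict, at most
`2 Δ(X) Δ(Y)` vertices `w` are unusable as a partner for `u`, and composing `σ` with the
transposition of `u` and a usable `w` removes `uv` without creating a new conflict.
-/

open Finset Function

namespace SimpleGraph

variable {α β γ : Type*} [Fintype α] [Fintype β] [Fintype γ]

theorem card_filter_exists_adj_adj_le (G : SimpleGraph α) (H : SimpleGraph β)
    [DecidableRel G.Adj] [DecidableRel H.Adj] (u : α) (f : α → β) {g : γ → β}
    (hg : Injective g) :
    #{w | ∃ x, G.Adj u x ∧ H.Adj (f x) (g w)} ≤ G.maxDegree * H.maxDegree := by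
  classical
  calc #{w | ∃ x, G.Adj u x ∧ H.Adj (f x) (g w)}
      ≤ #((G.neighborFinset u).biUnion fun x => H.neighborFinset (f x)) :=
        card_le_card_of_injOn g (fun w hw => by simpa using hw) hg.injOn
    _ ≤ #(G.neighborFinset u) * H.maxDegree :=
        card_biUnion_le_card_mul _ _ _ fun x _ => by
          simpa using H.degree_le_maxDegree (f x)
    _ ≤ G.maxDegree * H.maxDegree := by
        gcongr
        simpa using G.degree_le_maxDegree u

variable {V W : Type*} (X : SimpleGraph V) (Y : SimpleGraph W)

def IsPacking (σ : V ≃ W) : Prop :=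
  ∀ ⦃a b⦄, X.Adj a b → ¬ Y.Adj (σ a) (σ b)

section Conflicts

variable [Fintype V] [DecidableRel X.Adj] [DecidableRel Y.Adj]

def packingConflicts (σ : V ≃ W) : Finset (V × V) :=
  {p | X.Adj p.1 p.2 ∧ Y.Adj (σ p.1) (σ p.2)}

variable {X Y}

theorem mem_packingConflicts {σ : V ≃ W} {a b : V} :
    (a, b) ∈ packingConflicts X Y σ ↔ X.Adj a b ∧ Y.Adj (σ a) (σ b) := by
  simp [packingConflicts]

theorem isPacking_iff_packingConflicts_eq_empty {σ : V ≃ W} :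
    IsPacking X Y σ ↔ packingConflicts X Y σ = ∅ := by
  simp [IsPacking, packingConflicts, eq_empty_iff_forall_notMem]

theorem packingConflicts_swap_ssubset [DecidableEq V] {σ : V ≃ W} {u v w : V}
    (huv : (u, v) ∈ packingConflicts X Y σ) (hwv : w ≠ v)
    (hu : ∀ x, X.Adj u x → ¬ Y.Adj (σ x) (σ w))
    (hw : ∀ x, X.Adj w x → ¬ Y.Adj (σ u) (σ x)) :
    packingConflicts X Y ((Equiv.swap u w).trans σ) ⊂ packingConflicts X Y σ := by
  rw [mem_packingConflicts] at huv
  have hvu : v ≠ u := huv.1.ne.symm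
  refine Finset.ssubset_iff_subset_ne.mpr ⟨fun ⟨a, b⟩ hab => ?_, fun heq => ?_⟩
  · rw [mem_packingConflicts] at hab ⊢
    obtain ⟨hX, hY⟩ := hab
    refine ⟨hX, ?_⟩
    simp only [Equiv.trans_apply, Equiv.swap_apply_def] at hY
    -- edges avoiding `u, w` and the edge `uw` keep their status; `hu`, `hw` forbid the others
    split_ifs at hY <;> subst_vars <;> grind [Adj.symm, Adj.ne]
  · have := mem_packingConflicts.mp (heq ▸ mem_packingConflicts.mpr huv)
    simp only [Equiv.trans_apply, Equiv.swap_apply_left,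
      Equiv.swap_apply_of_ne_of_ne hvu hwv.symm] at this
    exact hu v huv.1 this.2.symm

theorem exists_swap_packingConflicts_ssubset [Fintype W] [DecidableEq V]
    (h : 2 * X.maxDegree * Y.maxDegree < Fintype.card V)
    {σ : V ≃ W} {u v : V} (huv : (u, v) ∈ packingConflicts X Y σ) :
    ∃ w, packingConflicts X Y ((Equiv.swap u w).trans σ) ⊂ packingConflicts X Y σ := by
  have hXY := mem_packingConflicts.mp huv
  -- the partners `w` excluded by `packingConflicts_swap_ssubset`, besides `v`
  set B₁ : Finset V := {w | ∃ x, X.Adj u x ∧ Y.Adj (σ x) (σ w)}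
  set B₂ : Finset V := {w | ∃ y, Y.Adj (σ u) y ∧ X.Adj (σ.symm y) w}
  have hu : u ∈ B₁ ∩ B₂ := by
    simp only [B₁, B₂, mem_inter, mem_filter, mem_univ, true_and]
    exact ⟨⟨v, hXY.1, hXY.2.symm⟩, ⟨σ v, hXY.2, by simpa using hXY.1.symm⟩⟩
  have hcard : #(insert v (B₁ ∪ B₂)) < #(univ : Finset V) := by
    have h₁ : #B₁ ≤ X.maxDegree * Y.maxDegree :=
      card_filter_exists_adj_adj_le X Y u σ σ.injective
    have h₂ : #B₂ ≤ Y.maxDegree * X.maxDegree :=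
      card_filter_exists_adj_adj_le Y X (σ u) σ.symm injective_id
    have := card_union_add_card_inter B₁ B₂
    have := card_insert_le v (B₁ ∪ B₂)
    have := card_pos.mpr ⟨u, hu⟩
    rw [card_univ]
    linarith
  obtain ⟨w, -, hw⟩ := exists_mem_notMem_of_card_lt_card hcard
  simp only [B₁, B₂, mem_insert, mem_union, mem_filter, mem_univ, true_and, not_or,
    not_exists, not_and] at hw
  exact ⟨w, packingConflicts_swap_ssubset huv hw.1 hw.2.1
    fun x hx hy => hw.2.2 (σ x) hy (by simpa using hx.symm)⟩

theorem exists_isPacking [Fintype W] (h : 2 * X.maxDegree * Y.maxDegree < Fintype.card V)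
    [Nonempty (V ≃ W)] : ∃ σ : V ≃ W, IsPacking X Y σ := by
  classical
  obtain ⟨σ, hσ⟩ := Finite.exists_min fun σ : V ≃ W => #(packingConflicts X Y σ)
  refine ⟨σ, isPacking_iff_packingConflicts_eq_empty.mpr ?_⟩
  by_contra hne
  obtain ⟨⟨u, v⟩, huv⟩ := nonempty_iff_ne_empty.mpr hne
  obtain ⟨w, hw⟩ := exists_swap_packingConflicts_ssubset h huv
  exact (card_lt_card hw).not_ge (hσ _)

end Conflicts

end SimpleGraph

theorem FS.isIsolated_of_isPacking {V W : Type*} {X : SimpleGraph V} {Y : SimpleGraph W}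
    {σ : V ≃ W} (hσ : X.IsPacking Y σ) : (FS X Y).IsIsolated σ :=
  fun _ ⟨_, _, hX, hY, _⟩ => hσ hX hY

theorem fs_disconnected_of_small_degrees_general {V W : Type*} [Fintype V] [Fintype W]
    (n : ℕ) (hV : Fintype.card V = n) (hW : Fintype.card W = n) (hn : 2 ≤ n)
    (X : SimpleGraph V) (Y : SimpleGraph W)
    [DecidableRel X.Adj] [DecidableRel Y.Adj]
    (h : 2 * X.maxDegree * Y.maxDegree < n) :
    ¬ (FS X Y).Connected := by
  have e : V ≃ W := Fintype.equivOfCardEq (hV.trans hW.symm)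
  have : Nontrivial V := Fintype.one_lt_card_iff_nontrivial.mp (by omega)
  have : Nontrivial (V ≃ W) := (Equiv.equivCongr (Equiv.refl V) e).symm.nontrivial
  obtain ⟨σ, hσ⟩ := SimpleGraph.exists_isPacking (X := X) (Y := Y) (hV ▸ h)
  exact fun hconn => hconn.preconnected.not_isIsolated σ (FS.isIsolated_of_isPacking hσ)

theorem fs_disconnected_of_small_degrees {V W : Type*} [Fintype V] [Fintype W]
    (n : ℕ) (hV : Fintype.card V = n) (hW : Fintype.card W = n) (hn : 2 ≤ n)
    (X : SimpleGraph V) (Y : SimpleGraph W)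
    [DecidableRel X.Adj] [DecidableRel Y.Adj]
    (hedge : ∃ a b : V, X.Adj a b)
    (h : 2 * X.maxDegree * Y.maxDegree < n) :
    ¬ (FS X Y).Connected :=
  fs_disconnected_of_small_degrees_general n hV hW hn X Y h
end

section
/- Let G and H be graphs on vertex set {1,…,m+2} such that m+1 and m+2 are (G,H)-exchangeable from the identity bijection. Let φ be a graph embedding of G into X and ψ a graph embedding of H into Y (X, Y graphs on n vertices). Then ψ(m+1) and ψ(m+2) are (X,Y)-exchangeable from any bijection σ : V(X) → V(Y) satisfying σ ∘ φ = ψ. -/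
/-!
A bijection `π` of the common vertex set of `G` and `H` lifts to the bijection `V(X) → V(Y)` that
equals `ψ ∘ π ∘ φ⁻¹` on the image of `φ` and `σ` elsewhere. Since `φ` and `ψ` are embeddings with
`σ ∘ φ = ψ`, a single move in `FS(G,H)` lifts to a single move in `FS(X,Y)`, so lifting is a graph
homomorphism `FS(G,H) → FS(X,Y)`. It sends the identity to `σ` and `τ_{uv}` to `τ_{ψ u, ψ v} ∘ σ`,
hence maps a path witnessing exchangeability of `u, v` to one witnessing that of `ψ u, ψ v`.
-/

namespace FS

variable {U V W : Type*}

noncomputable def liftPerm (φ : U ↪ V) (σ : V ≃ W) (π : Equiv.Perm U) : V ≃ W :=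
  (π.viaEmbedding φ).trans σ

theorem liftPerm_apply_embedding (φ : U ↪ V) (σ : V ≃ W) (π : Equiv.Perm U) (i : U) :
    liftPerm φ σ π (φ i) = σ (φ (π i)) := by
  rw [liftPerm, Equiv.trans_apply, Equiv.Perm.viaEmbedding_apply]

theorem liftPerm_apply_of_notMem (φ : U ↪ V) (σ : V ≃ W) (π : Equiv.Perm U) {x : V}
    (hx : x ∉ Set.range φ) : liftPerm φ σ π x = σ x := by
  rw [liftPerm, Equiv.trans_apply, Equiv.Perm.viaEmbedding_apply_of_notMem _ _ _ hx]

theorem liftPerm_refl (φ : U ↪ V) (σ : V ≃ W) : liftPerm φ σ (Equiv.refl U) = σ := by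
  ext x
  by_cases hx : x ∈ Set.range φ
  · obtain ⟨i, rfl⟩ := hx
    exact liftPerm_apply_embedding φ σ _ i
  · exact liftPerm_apply_of_notMem φ σ _ hx

theorem liftPerm_trans_swap [DecidableEq U] [DecidableEq W] (φ : U ↪ V) (σ : V ≃ W)
    (π : Equiv.Perm U) (u v : U) :
    liftPerm φ σ (π.trans (Equiv.swap u v)) =
      (liftPerm φ σ π).trans (Equiv.swap (σ (φ u)) (σ (φ v))) := by
  have hinj : Function.Injective (σ ∘ φ) := σ.injective.comp φ.injective
  ext x
  rw [Equiv.trans_apply]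
  by_cases hx : x ∈ Set.range φ
  · obtain ⟨i, rfl⟩ := hx
    rw [liftPerm_apply_embedding, liftPerm_apply_embedding, Equiv.trans_apply]
    exact (hinj.swap_apply u v (π i)).symm
  · rw [liftPerm_apply_of_notMem φ σ _ hx, liftPerm_apply_of_notMem φ σ _ hx]
    refine (Equiv.swap_apply_of_ne_of_ne ?_ ?_).symm <;>
      exact fun h => hx ⟨_, (σ.injective h).symm⟩

variable {G H : SimpleGraph U} {X : SimpleGraph V} {Y : SimpleGraph W}

theorem adj_liftPerm (φ : G ↪g X) (ψ : H ↪g Y) (σ : V ≃ W) (hσ : ∀ i, σ (φ i) = ψ i)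
    {π π' : Equiv.Perm U} (h : (FS G H).Adj π π') :
    (FS X Y).Adj (liftPerm φ.toEmbedding σ π) (liftPerm φ.toEmbedding σ π') := by
  obtain ⟨a, b, hG, hH, ha, hb, hrest⟩ := h
  have hlift : ∀ ρ i, liftPerm φ.toEmbedding σ ρ (φ i) = ψ (ρ i) := fun ρ i =>
    (liftPerm_apply_embedding φ.toEmbedding σ ρ i).trans (hσ (ρ i))
  refine ⟨φ a, φ b, φ.map_rel_iff.2 hG, ?_, ?_, ?_, fun c hca hcb => ?_⟩
  · rw [hlift, hlift]
    exact ψ.map_rel_iff.2 hH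
  · rw [hlift, hlift, ha]
  · rw [hlift, hlift, hb]
  · by_cases hc : c ∈ Set.range φ.toEmbedding
    · obtain ⟨i, rfl⟩ := hc
      have hia : i ≠ a := fun h => hca (congrArg φ h)
      have hib : i ≠ b := fun h => hcb (congrArg φ h)
      exact (hlift π' i).trans ((congrArg ψ (hrest i hia hib)).trans (hlift π i).symm)
    · rw [liftPerm_apply_of_notMem _ _ _ hc, liftPerm_apply_of_notMem _ _ _ hc]

noncomputable def liftHom (φ : G ↪g X) (ψ : H ↪g Y) (σ : V ≃ W) (hσ : ∀ i, σ (φ i) = ψ i) :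
    FS G H →g FS X Y where
  toFun := liftPerm φ.toEmbedding σ
  map_rel' := adj_liftPerm φ ψ σ hσ

end FS

open FS in
theorem Exchangeable.lift {U V W : Type*} [DecidableEq U] [DecidableEq W]
    {G H : SimpleGraph U} {X : SimpleGraph V} {Y : SimpleGraph W} {u v : U} {π : Equiv.Perm U}
    (h : Exchangeable G H u v π) (φ : G ↪g X) (ψ : H ↪g Y) (σ : V ≃ W)
    (hσ : ∀ i, σ (φ i) = ψ i) :
    Exchangeable X Y (ψ u) (ψ v) (liftPerm φ.toEmbedding σ π) := by
  have hpath := h.map (liftHom φ ψ σ hσ)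
  rwa [liftHom, RelHom.coeFn_mk, liftPerm_trans_swap, RelEmbedding.coe_toEmbedding, hσ, hσ]
    at hpath

theorem fs_exchangeable_of_embeddings {V W : Type*} [DecidableEq W] (m : ℕ)
    (G H : SimpleGraph (Fin (m + 2)))
    (hGH : Exchangeable G H (⟨m, by omega⟩ : Fin (m + 2)) (⟨m + 1, by omega⟩ : Fin (m + 2))
      (Equiv.refl (Fin (m + 2))))
    (X : SimpleGraph V) (Y : SimpleGraph W)
    (φ : G ↪g X) (ψ : H ↪g Y) (σ : V ≃ W)
    (hσ : ∀ i : Fin (m + 2), σ (φ i) = ψ i) :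
    Exchangeable X Y (ψ (⟨m, by omega⟩ : Fin (m + 2))) (ψ (⟨m + 1, by omega⟩ : Fin (m + 2))) σ := by
  simpa only [FS.liftPerm_refl] using hGH.lift φ ψ σ hσ
end

section
/- For n ≥ 4, FS(C_n, S_n) is disconnected, where C_n is the cycle and S_n the star on n vertices. -/
/-- The star on `n` vertices, with center `0`. -/
def starGraph (n : ℕ) : SimpleGraph (Fin n) :=
  SimpleGraph.fromRel (fun i _ => i.val = 0)

/-!
A move slides a token into the blank on an adjacent vertex of the cycle, so no token ever
passes another: the cyclic order in which any three tokens sit around the cycle is invariant.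
For `n ≥ 4` there are three non-center tokens, and the identity and the transposition of
tokens `2` and `3` place them in opposite cyclic orders.
-/

open SimpleGraph hiding starGraph
open Equiv

theorem SimpleGraph.Reachable.iff_of_adj {V : Type*} {G : SimpleGraph V} {P : V → Prop}
    (hP : ∀ ⦃u v⦄, G.Adj u v → (P u ↔ P v)) {u v : V} (h : G.Reachable u v) : P u ↔ P v := by
  obtain ⟨w⟩ := h
  induction w with
  | nil => rfl
  | cons hadj _ ih => exact (hP hadj).trans ih

theorem FS.exists_eq_swap_trans_of_adj {V W : Type*} [DecidableEq V] {X : SimpleGraph V}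
    {Y : SimpleGraph W} {σ τ : V ≃ W} (h : (FS X Y).Adj σ τ) :
    ∃ a b, X.Adj a b ∧ Y.Adj (σ a) (σ b) ∧ τ = (swap a b).trans σ := by
  obtain ⟨a, b, hX, hY, ha, hb, hrest⟩ := h
  refine ⟨a, b, hX, hY, Equiv.ext fun c => ?_⟩
  rw [trans_apply]
  by_cases hca : c = a
  · rw [hca, swap_apply_left, ha]
  by_cases hcb : c = b
  · rw [hcb, swap_apply_right, hb]
  rw [swap_apply_of_ne_of_ne hca hcb, hrest c hca hcb]

theorem starGraph_adj_eq_zero {n : ℕ} {u v : Fin (n + 1)} (h : (starGraph (n + 1)).Adj u v) :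
    u = 0 ∨ v = 0 := by
  rw [starGraph, fromRel_adj] at h
  simpa only [Fin.ext_iff, Fin.val_zero, or_comm] using h.2

def CyclicallyOrdered {n : ℕ} (x y z : Fin n) : Prop :=
  x < y ∧ y < z ∨ y < z ∧ z < x ∨ z < x ∧ x < y

section CyclicallyOrdered

variable {n : ℕ}

theorem cyclicallyOrdered_rotate {x y z : Fin n} :
    CyclicallyOrdered x y z ↔ CyclicallyOrdered y z x := by
  unfold CyclicallyOrdered
  tauto

theorem cyclicallyOrdered_add_one_middle_iff {x y z : Fin (n + 1)} (hxy : x ≠ y) (hzy : z ≠ y)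
    (hx : x ≠ y + 1) (hz : z ≠ y + 1) :
    CyclicallyOrdered x (y + 1) z ↔ CyclicallyOrdered x y z := by
  simp only [CyclicallyOrdered, Fin.lt_def]
  rw [Ne, Fin.ext_iff] at hxy hzy hx hz
  have hy := y.isLt
  rw [Fin.val_add_one] at hx hz ⊢
  split_ifs at hx hz ⊢ with hlast
  · simp only [hlast, Fin.val_last] at hxy hzy ⊢
    omega
  · omega

theorem cyclicallyOrdered_middle_iff_of_adjacent {x z a b : Fin (n + 1)}
    (hab : b = a + 1 ∨ a = b + 1) (hxa : x ≠ a) (hxb : x ≠ b) (hza : z ≠ a) (hzb : z ≠ b) :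
    CyclicallyOrdered x a z ↔ CyclicallyOrdered x b z := by
  rcases hab with rfl | rfl
  · exact (cyclicallyOrdered_add_one_middle_iff hxa hza hxb hzb).symm
  · exact cyclicallyOrdered_add_one_middle_iff hxb hzb hxa hza

theorem cyclicallyOrdered_swap_iff {x y z a b : Fin (n + 1)} (hab : b = a + 1 ∨ a = b + 1)
    (hx : x ≠ a) (hy : y ≠ a) (hz : z ≠ a) (hxy : x ≠ y) (hyz : y ≠ z) (hzx : z ≠ x) :
    CyclicallyOrdered (swap a b x) (swap a b y) (swap a b z) ↔ CyclicallyOrdered x y z := by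
  have moved_middle : ∀ {x z}, x ≠ a → x ≠ b → z ≠ a → z ≠ b →
      (CyclicallyOrdered (swap a b x) (swap a b b) (swap a b z) ↔ CyclicallyOrdered x b z) := by
    intro x z hxa hxb hza hzb
    rw [swap_apply_right, swap_apply_of_ne_of_ne hxa hxb, swap_apply_of_ne_of_ne hza hzb]
    exact cyclicallyOrdered_middle_iff_of_adjacent hab hxa hxb hza hzb
  by_cases hyb : y = b
  · subst hyb
    exact moved_middle hx hxy hz hyz.symm
  by_cases hxb : x = b
  · subst hxb
    rw [← cyclicallyOrdered_rotate, ← cyclicallyOrdered_rotate (x := z)]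
    exact moved_middle hz hzx hy hxy.symm
  by_cases hzb : z = b
  · subst hzb
    rw [cyclicallyOrdered_rotate, cyclicallyOrdered_rotate (x := x)]
    exact moved_middle hy hyz hx hzx.symm
  rw [swap_apply_of_ne_of_ne hx hxb, swap_apply_of_ne_of_ne hy hyb, swap_apply_of_ne_of_ne hz hzb]

end CyclicallyOrdered

section Invariant

variable {n : ℕ} {i j k : Fin (n + 2)}

theorem cyclicallyOrdered_symm_iff_of_adj {σ τ : Fin (n + 2) ≃ Fin (n + 2)}
    (h : (FS (cycleGraph (n + 2)) (starGraph (n + 2))).Adj σ τ)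
    (hi : i ≠ 0) (hj : j ≠ 0) (hk : k ≠ 0) (hij : i ≠ j) (hjk : j ≠ k) (hki : k ≠ i) :
    CyclicallyOrdered (σ.symm i) (σ.symm j) (σ.symm k) ↔
      CyclicallyOrdered (τ.symm i) (τ.symm j) (τ.symm k) := by
  have blank_at : ∀ a b, (cycleGraph (n + 2)).Adj a b → σ a = 0 →
      (CyclicallyOrdered (σ.symm i) (σ.symm j) (σ.symm k) ↔ CyclicallyOrdered
        (swap a b (σ.symm i)) (swap a b (σ.symm j)) (swap a b (σ.symm k))) := by
    intro a b hX hσa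
    have hab : b = a + 1 ∨ a = b + 1 := by
      rw [cycleGraph_adj, sub_eq_iff_eq_add', sub_eq_iff_eq_add'] at hX
      exact hX.symm
    have not_at_a : ∀ {t}, t ≠ 0 → σ.symm t ≠ a := fun ht hta =>
      ht (by rw [← hσa, ← hta, apply_symm_apply])
    exact (cyclicallyOrdered_swap_iff hab (not_at_a hi) (not_at_a hj) (not_at_a hk)
      (σ.symm.injective.ne hij) (σ.symm.injective.ne hjk) (σ.symm.injective.ne hki)).symm
  obtain ⟨a, b, hX, hY, rfl⟩ := FS.exists_eq_swap_trans_of_adj h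
  simp only [symm_trans_apply, symm_swap]
  rcases starGraph_adj_eq_zero hY with hσa | hσb
  · exact blank_at a b hX hσa
  · rw [swap_comm]
    exact blank_at b a hX.symm hσb

end Invariant

theorem fs_cycle_star_disconnected (n : ℕ) (hn : 4 ≤ n) :
    ¬ (FS (SimpleGraph.cycleGraph n) (starGraph n)).Connected := by
  obtain ⟨m, rfl⟩ : ∃ m, n = m + 4 := ⟨n - 4, by omega⟩
  intro hconn
  have h1 : (1 : Fin (m + 4)) ≠ 0 := by simp
  have h2 : (2 : Fin (m + 4)) ≠ 0 := by simp (disch := omega) [Fin.ext_iff, Nat.mod_eq_of_lt]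
  have h3 : (3 : Fin (m + 4)) ≠ 0 := by simp (disch := omega) [Fin.ext_iff, Nat.mod_eq_of_lt]
  have h12 : (1 : Fin (m + 4)) ≠ 2 := by simp (disch := omega) [Fin.ext_iff, Nat.mod_eq_of_lt]
  have h23 : (2 : Fin (m + 4)) ≠ 3 := by simp (disch := omega) [Fin.ext_iff, Nat.mod_eq_of_lt]
  have h31 : (3 : Fin (m + 4)) ≠ 1 := by simp (disch := omega) [Fin.ext_iff, Nat.mod_eq_of_lt]
  have horder := (hconn.preconnected (Equiv.refl _) (swap 2 3)).iff_of_adj fun σ τ h =>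
    cyclicallyOrdered_symm_iff_of_adj h h1 h2 h3 h12 h23 h31
  simp (disch := omega) [CyclicallyOrdered, Fin.lt_def, Nat.mod_eq_of_lt,
    swap_apply_of_ne_of_ne h12 h31.symm] at horder
end
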